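/- arXiv:2007.10483 — 6 statements merged into one kernel-verified Lean document; each statement's English description precedes it below -/
import Mathlib

section
/- Let d ≥ 2 and let {E_x}_{x=1}^{d²} be a semi-SIC POVM with parameter b on ℂ^d. Then for every index x, the real number a_x := Tr[E_x] satisfies the quadratic equation a_x² − a_x + (d²−1)·b = 0; equivalently, Tr[E_x] ∈ {a₊, a₋} where a₊ = (1 + √(1 − 4b(d²−1)))/2 and a₋ = (1 − √(1 − 4b(d²−1)))/2. -/
/-!
Multiplying `∑ y, E y = 1` by `E x` and taking traces gives
`Tr E_x = Tr E_x² + (d² - 1) b`. A rank-one Hermitian matrix has a single nonzero eigenvalue,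
so `Tr E_x² = (Tr E_x)²`, which turns this into the quadratic equation for `Tr E_x`; its roots
are read off by completing the square.
-/

open Matrix
open scoped ComplexOrder

noncomputable section

/-- A semi-SIC POVM with parameter `b` on `ℂ^d`: a family of `d²` positive semidefinite
rank-one matrices summing to the identity, spanning the real vector space of Hermitian
matrices, and with constant pairwise Hilbert-Schmidt inner product `b`. -/
def IsSemiSIC (d : ℕ) (b : ℝ) (E : Fin (d ^ 2) → Matrix (Fin d) (Fin d) ℂ) : Prop :=
  (∀ x, (E x).PosSemidef) ∧
  (∀ x, (E x).rank = 1) ∧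
  (∑ x, E x = 1) ∧
  (∀ A : Matrix (Fin d) (Fin d) ℂ, A.IsHermitian → A ∈ Submodule.span ℝ (Set.range E)) ∧
  (∀ x y, x ≠ y → (E x * E y).trace = (b : ℂ))

theorem Real.eq_one_add_sqrt_div_two_or_eq_one_sub_sqrt_div_two {a c : ℝ}
    (h : a ^ 2 - a + c = 0) :
    a = (1 + √(1 - 4 * c)) / 2 ∨ a = (1 - √(1 - 4 * c)) / 2 := by
  have hdisc : 1 - 4 * c = (2 * a - 1) ^ 2 := by linear_combination (-4) * h
  rw [hdisc, Real.sqrt_sq_eq_abs]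
  rcases abs_choice (2 * a - 1) with habs | habs <;> rw [habs]
  · left; ring
  · right; ring

namespace Matrix

theorem trace_eq_trace_mul_self_add_of_sum_eq_one {ι n R : Type*} [Fintype ι] [Fintype n]
    [DecidableEq n] [CommRing R] (E : ι → Matrix n n R) (b : R) (hsum : ∑ y, E y = 1)
    (hpair : ∀ x y, x ≠ y → (E x * E y).trace = b) (x : ι) :
    (E x).trace = (E x * E x).trace + (Fintype.card ι - 1) * b := by
  classical
  calc (E x).trace = ∑ y, (E x * E y).trace := by
        rw [← trace_sum, ← Matrix.mul_sum, hsum, mul_one]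
    _ = (E x * E x).trace + ∑ _y ∈ Finset.univ.erase x, b := by
        rw [← Finset.add_sum_erase _ _ (Finset.mem_univ x)]
        exact congrArg _ <| Finset.sum_congr rfl fun y hy ↦
          hpair x y (Finset.ne_of_mem_erase hy).symm
    _ = (E x * E x).trace + (Fintype.card ι - 1) * b := by
        rw [Finset.sum_erase_eq_sub (Finset.mem_univ x), Finset.sum_const, Finset.card_univ,
          nsmul_eq_mul]
        ring

variable {n 𝕜 : Type*} [Fintype n] [DecidableEq n] [RCLike 𝕜] {A : Matrix n n 𝕜}

theorem IsHermitian.trace_mul_self_eq_sum_eigenvalues_sq (hA : A.IsHermitian) :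
    (A * A).trace = ∑ i, (hA.eigenvalues i : 𝕜) ^ 2 := by
  conv_lhs => rw [hA.spectral_theorem, ← map_mul, Unitary.conjStarAlgAut_apply, trace_mul_cycle,
    Unitary.coe_star_mul_self, one_mul, diagonal_mul_diagonal, trace_diagonal]
  simp [sq]

theorem IsHermitian.trace_mul_self_eq_trace_sq_of_rank_eq_one (hA : A.IsHermitian)
    (hr : A.rank = 1) : (A * A).trace = A.trace ^ 2 := by
  obtain ⟨⟨i, _⟩, hi⟩ :=
    Fintype.card_eq_one_iff.mp (hA.rank_eq_card_non_zero_eigs.symm.trans hr)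
  have hzero : ∀ j, j ≠ i → hA.eigenvalues j = 0 := fun j hj ↦
    not_not.mp fun hj' ↦ hj (congrArg Subtype.val (hi ⟨j, hj'⟩))
  rw [hA.trace_mul_self_eq_sum_eigenvalues_sq, hA.trace_eq_sum_eigenvalues,
    Finset.sum_eq_single i (fun j _ hj ↦ by simp [hzero j hj]) (by simp),
    Finset.sum_eq_single i (fun j _ hj ↦ by simp [hzero j hj]) (by simp)]

end Matrix

theorem trace_quadratic_of_isSemiSIC_general (d : ℕ) (b : ℝ)
    (E : Fin (d ^ 2) → Matrix (Fin d) (Fin d) ℂ) (hE : IsSemiSIC d b E) (x : Fin (d ^ 2)) :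
    ∃ a : ℝ, (E x).trace = (a : ℂ) ∧
      a ^ 2 - a + ((d : ℝ) ^ 2 - 1) * b = 0 ∧
      (a = (1 + Real.sqrt (1 - 4 * b * ((d : ℝ) ^ 2 - 1))) / 2 ∨
       a = (1 - Real.sqrt (1 - 4 * b * ((d : ℝ) ^ 2 - 1))) / 2) := by
  obtain ⟨hpsd, hrank, hsum, -, hpair⟩ := hE
  have hherm := (hpsd x).isHermitian
  obtain ⟨a, ha⟩ : ∃ a : ℝ, (E x).trace = a :=
    ⟨∑ i, hherm.eigenvalues i, by simp [hherm.trace_eq_sum_eigenvalues]⟩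
  have hquad : a ^ 2 - a + ((d : ℝ) ^ 2 - 1) * b = 0 := by
    have h := trace_eq_trace_mul_self_add_of_sum_eq_one E (b : ℂ) hsum hpair x
    rw [hherm.trace_mul_self_eq_trace_sq_of_rank_eq_one (hrank x), ha, Fintype.card_fin] at h
    have h' : a = a ^ 2 + ((d : ℝ) ^ 2 - 1) * b := by exact_mod_cast h
    linarith
  refine ⟨a, ha, hquad, ?_⟩
  rw [show 4 * b * ((d : ℝ) ^ 2 - 1) = 4 * (((d : ℝ) ^ 2 - 1) * b) by ring]
  exact Real.eq_one_add_sqrt_div_two_or_eq_one_sub_sqrt_div_two hquad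

theorem trace_quadratic_of_isSemiSIC (d : ℕ) (hd : 2 ≤ d) (b : ℝ)
    (E : Fin (d ^ 2) → Matrix (Fin d) (Fin d) ℂ) (hE : IsSemiSIC d b E) (x : Fin (d ^ 2)) :
    ∃ a : ℝ, (E x).trace = (a : ℂ) ∧
      a ^ 2 - a + ((d : ℝ) ^ 2 - 1) * b = 0 ∧
      (a = (1 + Real.sqrt (1 - 4 * b * ((d : ℝ) ^ 2 - 1))) / 2 ∨
       a = (1 - Real.sqrt (1 - 4 * b * ((d : ℝ) ^ 2 - 1))) / 2) :=
  trace_quadratic_of_isSemiSIC_general d b E hE x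
end
end

section
/- Let d ≥ 2 and let {E_x}_{x=1}^{d²} be a semi-SIC POVM with parameter b on ℂ^d. Then b ≤ 1/(4(d²−1)). -/
/-!
Write `t_x = tr E_x`. A rank-one Hermitian matrix has a single nonzero eigenvalue, so
`tr (E_x²) = t_x²`. Taking the trace of `(∑ E_x)² = 1` gives `∑ t_x² + d²(d² - 1) b = d`,
while `∑ t_x = tr 1 = d` and Cauchy–Schwarz over the `d²` terms give `∑ t_x² ≥ 1`. Hence
`b ≤ 1 / (d²(d + 1))`, and `d²(d + 1) - 4(d² - 1) = (d - 2)²(d + 1) ≥ 0`.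
-/

open Matrix
open scoped ComplexOrder

noncomputable section

namespace Matrix.IsHermitian

variable {𝕜 n : Type*} [RCLike 𝕜] [Fintype n] [DecidableEq n] {A : Matrix n n 𝕜}

lemma ofReal_re_trace (hA : A.IsHermitian) : (RCLike.re A.trace : 𝕜) = A.trace := by
  rw [hA.trace_eq_sum_eigenvalues, ← RCLike.ofReal_sum, RCLike.ofReal_re]

lemma trace_mul_self_eq_sum_eigenvalues_sq_s1 (hA : A.IsHermitian) :
    (A * A).trace = ∑ i, (hA.eigenvalues i : 𝕜) ^ 2 := by
  conv_lhs => rw [hA.spectral_theorem, ← map_mul]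
  rw [Unitary.conjStarAlgAut_apply, trace_mul_cycle,
    Unitary.coe_star_mul_self, one_mul, diagonal_mul_diagonal, trace_diagonal]
  simp [sq]

lemma trace_mul_self_eq_trace_sq_of_rank_le_one (hA : A.IsHermitian) (hr : A.rank ≤ 1) :
    (A * A).trace = A.trace ^ 2 := by
  rw [hA.trace_mul_self_eq_sum_eigenvalues_sq_s1, hA.trace_eq_sum_eigenvalues]
  have hcard := Fintype.card_le_one_iff.1 (hA.rank_eq_card_non_zero_eigs ▸ hr)
  by_cases h : ∃ i, hA.eigenvalues i ≠ 0
  · obtain ⟨i, hi⟩ := h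
    have hzero : ∀ j ≠ i, (hA.eigenvalues j : 𝕜) = 0 := fun j hj => by
      rw [RCLike.ofReal_eq_zero]
      exact not_not.1 fun hj' => hj (congrArg Subtype.val (hcard ⟨j, hj'⟩ ⟨i, hi⟩))
    rw [Fintype.sum_eq_single i fun j hj => by rw [hzero j hj, sq, mul_zero],
      Fintype.sum_eq_single i hzero]
  · push Not at h
    simp [h]

end Matrix.IsHermitian

lemma sum_trace_mul_self_add_card_mul_eq_card {ι n R : Type*} [Fintype ι] [Fintype n]
    [DecidableEq n] [CommRing R] {E : ι → Matrix n n R} (hsum : ∑ x, E x = 1) {b : R}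
    (hb : ∀ x y, x ≠ y → (E x * E y).trace = b) :
    ∑ x, (E x * E x).trace + Fintype.card ι * (Fintype.card ι - 1) * b = Fintype.card n := by
  have hgram : ∑ x, ∑ y, (E x * E y).trace = Fintype.card n := by
    simp_rw [← trace_sum, ← Finset.mul_sum, ← Finset.sum_mul, hsum, one_mul, trace_one]
  have hrow x : ∑ y, ((E x * E y).trace - b) = (E x * E x).trace - b :=
    Fintype.sum_eq_single x fun y hy => sub_eq_zero.2 (hb x y (Ne.symm hy))
  have := Finset.sum_congr rfl fun x (_ : x ∈ Finset.univ) => hrow x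
  simp only [Finset.sum_sub_distrib, hgram, Finset.sum_const, Finset.card_univ,
    nsmul_eq_mul] at this
  linear_combination -this

lemma IsSemiSIC.le_one_div_sq_mul_add_one {d : ℕ} {b : ℝ}
    {E : Fin (d ^ 2) → Matrix (Fin d) (Fin d) ℂ} (hE : IsSemiSIC d b E) (hd : 2 ≤ d) :
    b ≤ 1 / ((d : ℝ) ^ 2 * (d + 1)) := by
  obtain ⟨hpsd, hrank, hsum, -, hb⟩ := hE
  set t : Fin (d ^ 2) → ℝ := fun x => RCLike.re (E x).trace
  have htrace x : (E x).trace = t x := ((hpsd x).isHermitian.ofReal_re_trace).symm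
  have hsum_t : ∑ x, t x = d := by
    have := congrArg trace hsum
    simp only [trace_sum, htrace, trace_one, Fintype.card_fin] at this
    exact_mod_cast this
  have hgram : ∑ x, t x ^ 2 + (d : ℝ) ^ 2 * ((d : ℝ) ^ 2 - 1) * b = d := by
    have := sum_trace_mul_self_add_card_mul_eq_card hsum hb
    simp only [fun x => (hpsd x).isHermitian.trace_mul_self_eq_trace_sq_of_rank_le_one (hrank x).le,
      htrace, Fintype.card_fin] at this
    exact_mod_cast this
  have hcs : (d : ℝ) ^ 2 ≤ (d : ℝ) ^ 2 * ∑ x, t x ^ 2 := by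
    simpa [hsum_t] using sq_sum_le_card_mul_sum_sq (s := Finset.univ) (f := t)
  have hsq : 1 ≤ ∑ x, t x ^ 2 := le_of_mul_le_mul_left (by simpa using hcs) (by positivity)
  have hbound : (d : ℝ) ^ 2 * ((d : ℝ) ^ 2 - 1) * b ≤ d - 1 := by linarith
  have hd' : (2 : ℝ) ≤ d := by exact_mod_cast hd
  rw [le_div_iff₀ (by positivity)]
  nlinarith

lemma one_div_sq_mul_add_one_le {d : ℝ} (hd : 2 ≤ d) :
    1 / (d ^ 2 * (d + 1)) ≤ 1 / (4 * (d ^ 2 - 1)) :=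
  one_div_le_one_div_of_le (by nlinarith) (by nlinarith [sq_nonneg (d - 2)])

theorem b_le_of_isSemiSIC (d : ℕ) (hd : 2 ≤ d) (b : ℝ)
    (E : Fin (d ^ 2) → Matrix (Fin d) (Fin d) ℂ) (hE : IsSemiSIC d b E) :
    b ≤ 1 / (4 * ((d : ℝ) ^ 2 - 1)) :=
  (hE.le_one_div_sq_mul_add_one hd).trans (one_div_sq_mul_add_one_le (by exact_mod_cast hd))
end
end

section
/- Let d ≥ 2, let {E_x}_{x=1}^{d²} be a semi-SIC POVM with parameter b on ℂ^d, let a₋ = (1 − √(1 − 4b(d²−1)))/2, and let k denote the number of indices x with Tr[E_x] = a₋. If a₋ ≠ (1 + √(1 − 4b(d²−1)))/2, then d² − 2d = (2k − d²)·√(1 − 4b(d²−1)). -/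
/-!
Multiplying `∑ y, E y = 1` by `E x` and taking traces, with `Tr[E_x²] = Tr[E_x]²` because a
rank-one matrix is an outer product `u cᵀ`, shows that `t = Tr[E_x]` solves
`t² - t + b(d² - 1) = 0`, so `t = (1 ± s)/2` with `s = √(1 - 4b(d² - 1))`. The trace of
`∑ y, E y = 1` then reads `k (1 - s)/2 + (d² - k)(1 + s)/2 = d`, which is the identity.
As `a₋ ≠ a₊`, `s ≠ 0`: this excludes the junk value `√r = 0` for `r < 0`, so `s² = 1 - 4b(d² - 1)`.
-/

open Matrix
open scoped ComplexOrder
open scoped Finset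

noncomputable section

namespace Matrix

variable {m n K : Type*} [Fintype n] [DecidableEq n] [Field K]

theorem exists_eq_vecMulVec_of_rank_le_one [Finite m] {A : Matrix m n K} (h : A.rank ≤ 1) :
    ∃ (u : m → K) (c : n → K), A = vecMulVec u c := by
  obtain ⟨u, hu⟩ := finrank_le_one_iff.mp h
  choose c hc using fun j => hu ⟨A.col j, mulVec_single_one A j ▸ LinearMap.mem_range_self _ _⟩
  refine ⟨u, c, ext fun i j => ?_⟩
  rw [vecMulVec_apply, mul_comm]
  exact (congrFun (congrArg Subtype.val (hc j)) i).symm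

theorem trace_mul_self_of_rank_le_one {A : Matrix n n K} (h : A.rank ≤ 1) :
    (A * A).trace = A.trace ^ 2 := by
  obtain ⟨u, c, rfl⟩ := exists_eq_vecMulVec_of_rank_le_one h
  rw [vecMulVec_mul_vecMulVec, trace_vecMulVec, trace_vecMulVec, dotProduct_smul, smul_eq_mul,
    dotProduct_comm c u, sq]

theorem trace_sq_add_eq_trace_of_sum_eq_one {ι : Type*} [Fintype ι] [DecidableEq ι]
    {E : ι → Matrix n n K} {b : K} (hrank : ∀ x, (E x).rank ≤ 1) (hsum : ∑ x, E x = 1)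
    (hb : ∀ x y, x ≠ y → (E x * E y).trace = b) (x : ι) :
    (E x).trace ^ 2 + (Fintype.card ι - 1) * b = (E x).trace := by
  have hcard : (((Finset.univ.erase x).card : ℕ) : K) = Fintype.card ι - 1 := by
    rw [Finset.card_erase_of_mem (Finset.mem_univ x), Finset.card_univ,
      Nat.cast_pred (Fintype.card_pos_iff.mpr ⟨x⟩)]
  calc (E x).trace ^ 2 + (Fintype.card ι - 1) * b
      = (E x * E x).trace + ∑ y ∈ Finset.univ.erase x, (E x * E y).trace := by
        rw [trace_mul_self_of_rank_le_one (hrank x),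
          Finset.sum_congr rfl fun y hy => hb x y (Finset.ne_of_mem_erase hy).symm,
          Finset.sum_const, nsmul_eq_mul, hcard]
    _ = (E x * ∑ y, E y).trace := by
        rw [Finset.mul_sum, trace_sum]
        exact Finset.add_sum_erase _ (fun y => (E x * E y).trace) (Finset.mem_univ x)
    _ = (E x).trace := by rw [hsum, mul_one]

end Matrix

theorem eq_or_eq_of_sq_add_eq_self {K : Type*} [Field K] [NeZero (2 : K)] {t c s : K}
    (hs : s ^ 2 = 1 - 4 * c) (ht : t ^ 2 + c = t) : t = (1 - s) / 2 ∨ t = (1 + s) / 2 := by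
  have hfac : (2 * t - 1 + s) * (2 * t - 1 - s) = 0 := by linear_combination 4 * ht - hs
  rcases mul_eq_zero.mp hfac with h | h
  · exact .inl (eq_div_of_mul_eq two_ne_zero (by linear_combination h))
  · exact .inr (eq_div_of_mul_eq two_ne_zero (by linear_combination h))

theorem Finset.sum_eq_card_filter_mul_add_card_filter_mul {ι R : Type*} [CommSemiring R]
    [DecidableEq R] {s : Finset ι} {f : ι → R} {α β : R} (h : ∀ i ∈ s, f i = α ∨ f i = β) :
    ∑ i ∈ s, f i = #{i ∈ s | f i = α} * α + #{i ∈ s | f i ≠ α} * β := by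
  rw [← Finset.sum_filter_add_sum_filter_not s (f · = α),
    Finset.sum_congr rfl fun i hi => (Finset.mem_filter.mp hi).2,
    Finset.sum_congr rfl fun i hi => ((h i (Finset.mem_filter.mp hi).1).resolve_left
      (Finset.mem_filter.mp hi).2)]
  simp only [Finset.sum_const, nsmul_eq_mul]

theorem key_identity_of_isSemiSIC_general (d : ℕ) (b : ℝ)
    (E : Fin (d ^ 2) → Matrix (Fin d) (Fin d) ℂ) (hE : IsSemiSIC d b E)
    (aM : ℝ)
    (haM : aM = (1 - Real.sqrt (1 - 4 * b * ((d : ℝ) ^ 2 - 1))) / 2)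
    (k : ℕ)
    (hk : k = (Finset.univ.filter fun x => (E x).trace = (aM : ℂ)).card)
    (hne : aM ≠ (1 + Real.sqrt (1 - 4 * b * ((d : ℝ) ^ 2 - 1))) / 2) :
    (d : ℝ) ^ 2 - 2 * (d : ℝ) =
      (2 * (k : ℝ) - (d : ℝ) ^ 2) * Real.sqrt (1 - 4 * b * ((d : ℝ) ^ 2 - 1)) := by
  classical
  obtain ⟨-, hrank, hsum, -, hb⟩ := hE
  set s := Real.sqrt (1 - 4 * b * ((d : ℝ) ^ 2 - 1))
  have hs : s ^ 2 = 1 - 4 * b * ((d : ℝ) ^ 2 - 1) := by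
    refine Real.sq_sqrt (le_of_not_ge fun hle => hne ?_)
    rw [haM, show s = 0 from Real.sqrt_eq_zero'.mpr hle]
    norm_num
  have hroots : ∀ x, (E x).trace = (aM : ℂ) ∨ (E x).trace = ((1 + s) / 2 : ℝ) := by
    intro x
    have ht := trace_sq_add_eq_trace_of_sum_eq_one (fun x => (hrank x).le) hsum hb x
    push_cast [Fintype.card_fin] at ht
    rw [haM]
    push_cast
    have hsC : (s : ℂ) ^ 2 = 1 - 4 * b * ((d : ℂ) ^ 2 - 1) := by exact_mod_cast hs
    exact eq_or_eq_of_sq_add_eq_self (by linear_combination hsC) ht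
  have htrace : ∑ x, (E x).trace = d := by
    rw [← trace_sum, hsum, trace_one, Fintype.card_fin]
  have hcompl : (#{x | (E x).trace ≠ (aM : ℂ)} : ℝ) = d ^ 2 - k := by
    rw [hk, eq_sub_iff_add_eq', ← Nat.cast_add, Finset.card_filter_add_card_filter_not,
      Finset.card_univ, Fintype.card_fin, Nat.cast_pow]
  rw [Finset.sum_eq_card_filter_mul_add_card_filter_mul fun x _ => hroots x, ← hk] at htrace
  have hreal : k * aM + ((d : ℝ) ^ 2 - k) * ((1 + s) / 2) = d := by
    rw [← hcompl]
    exact_mod_cast htrace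
  rw [haM] at hreal
  linear_combination 2 * hreal

theorem key_identity_of_isSemiSIC (d : ℕ) (hd : 2 ≤ d) (b : ℝ)
    (E : Fin (d ^ 2) → Matrix (Fin d) (Fin d) ℂ) (hE : IsSemiSIC d b E)
    (aM : ℝ)
    (haM : aM = (1 - Real.sqrt (1 - 4 * b * ((d : ℝ) ^ 2 - 1))) / 2)
    (k : ℕ)
    (hk : k = (Finset.univ.filter fun x => (E x).trace = (aM : ℂ)).card)
    (hne : aM ≠ (1 + Real.sqrt (1 - 4 * b * ((d : ℝ) ^ 2 - 1))) / 2) :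
    (d : ℝ) ^ 2 - 2 * (d : ℝ) =
      (2 * (k : ℝ) - (d : ℝ) ^ 2) * Real.sqrt (1 - 4 * b * ((d : ℝ) ^ 2 - 1)) :=
  key_identity_of_isSemiSIC_general d b E hE aM haM k hk hne
end
end

section
/- Let θ ∈ (π/3, π/2] be the angle with cos θ = 1/(2√2), and define the 2×2 complex matrices E₁ := (2/5)·[[1,0],[0,0]], E₂ := (1/5)·[[1,1],[1,1]], E₃ := (1/5)·[[1, −√2·e^{−iθ}], [−√2·e^{iθ}, 2]], E₄ := (1/5)·[[1, −√2·e^{iθ}], [−√2·e^{−iθ}, 2]]. Then {E₁, E₂, E₃, E₄} is a semi-SIC POVM with parameter b = 2/25 on ℂ²: each E_x is positive semidefinite of rank one, E₁ + E₂ + E₃ + E₄ = 1, Tr[E_x E_y] = 2/25 for all x ≠ y, and {E₁, E₂, E₃, E₄} spans the real vector space of 2×2 Hermitian matrices. -/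
/-! All four matrices depend on `θ` only through `z = √2 e^{iθ}`: here `z z̄ = 2` always, and
`cos θ = 1/(2√2)` says exactly `z + z̄ = 1`. Each `E_x` is a positive multiple of `v v*` for
`v ∈ {(1,0), (1,1), (1,-z), (1,-z̄)}`, hence positive semidefinite of rank one. The completeness
relation and the pairwise traces are polynomial identities in `z, z̄` modulo the two relations
(e.g. `25 Tr[E₃E₄] = 5 + z² + z̄² = 5 + (z + z̄)² - 2 z z̄ = 2`). Finally `z = 1/2 + i√7/2`, so
`E₃ - E₄ = (2i Im z / 5) [[0,1],[-1,0]]` supplies the imaginary off-diagonal direction, while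
`E₁, E₂, E₃ + E₄` span the real symmetric matrices. -/

open Matrix
open scoped ComplexOrder

noncomputable section

/-- `E₁ = (2/5)·[[1,0],[0,0]]`. -/
def E1 : Matrix (Fin 2) (Fin 2) ℂ := (2 / 5 : ℂ) • !![1, 0; 0, 0]

/-- `E₂ = (1/5)·[[1,1],[1,1]]`. -/
def E2 : Matrix (Fin 2) (Fin 2) ℂ := (1 / 5 : ℂ) • !![1, 1; 1, 1]

/-- `E₃ = (1/5)·[[1, −√2·e^{−iθ}], [−√2·e^{iθ}, 2]]`. -/
def E3 (θ : ℝ) : Matrix (Fin 2) (Fin 2) ℂ :=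
  (1 / 5 : ℂ) •
    !![1, -((Real.sqrt 2 : ℝ) : ℂ) * Complex.exp (-(θ : ℂ) * Complex.I);
       -((Real.sqrt 2 : ℝ) : ℂ) * Complex.exp ((θ : ℂ) * Complex.I), 2]

/-- `E₄ = (1/5)·[[1, −√2·e^{iθ}], [−√2·e^{−iθ}, 2]]`. -/
def E4 (θ : ℝ) : Matrix (Fin 2) (Fin 2) ℂ :=
  (1 / 5 : ℂ) •
    !![1, -((Real.sqrt 2 : ℝ) : ℂ) * Complex.exp ((θ : ℂ) * Complex.I);
       -((Real.sqrt 2 : ℝ) : ℂ) * Complex.exp (-(θ : ℂ) * Complex.I), 2]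

/-- The example family `{E₁, E₂, E₃, E₄}`. -/
def exE (θ : ℝ) : Fin 4 → Matrix (Fin 2) (Fin 2) ℂ := ![E1, E2, E3 θ, E4 θ]

open ComplexConjugate

namespace Matrix

variable {m n K : Type*} [Fintype n] [Field K]

theorem rank_pos_of_ne_zero {A : Matrix m n K} (hA : A ≠ 0) : 0 < A.rank := by
  rw [Matrix.rank, Nat.pos_iff_ne_zero, Ne, Submodule.finrank_eq_zero, LinearMap.range_eq_bot]
  refine fun h => hA (Matrix.ext fun i j => ?_)
  classical
  simpa using congr(($h) (Pi.single j 1) i)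

theorem rank_vecMulVec_eq_one {w : m → K} {v : n → K} (hw : w ≠ 0) (hv : v ≠ 0) :
    (vecMulVec w v).rank = 1 := by
  refine le_antisymm (rank_vecMulVec_le w v) (rank_pos_of_ne_zero fun h => ?_)
  obtain ⟨i, hi⟩ := Function.ne_iff.mp hw
  obtain ⟨j, hj⟩ := Function.ne_iff.mp hv
  exact mul_ne_zero hi hj congr($h i j)

end Matrix

def qubitFamily (z : ℂ) : Fin 4 → Matrix (Fin 2) (Fin 2) ℂ :=
  ![E1, E2, (1 / 5 : ℂ) • !![1, -conj z; -z, 2], (1 / 5 : ℂ) • !![1, -z; -conj z, 2]]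

theorem exE_eq_qubitFamily (θ : ℝ) :
    exE θ = qubitFamily (Real.sqrt 2 * Complex.exp (θ * Complex.I)) := by
  have hconj : conj (Complex.exp (θ * Complex.I)) = Complex.exp (-θ * Complex.I) := by
    rw [← Complex.exp_conj]; simp
  ext x : 1
  fin_cases x <;> simp [exE, qubitFamily, E3, E4, hconj]

theorem sqrt_two_mul_exp_mul_conj (θ : ℝ) :
    Real.sqrt 2 * Complex.exp (θ * Complex.I) * conj (Real.sqrt 2 * Complex.exp (θ * Complex.I))
      = 2 := by
  rw [Complex.mul_conj, Complex.normSq_mul, Complex.normSq_ofReal, Complex.normSq_eq_norm_sq,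
    Complex.norm_exp_ofReal_mul_I]
  norm_num

theorem sqrt_two_mul_exp_add_conj {θ : ℝ} (hθcos : Real.cos θ = 1 / (2 * Real.sqrt 2)) :
    Real.sqrt 2 * Complex.exp (θ * Complex.I) + conj (Real.sqrt 2 * Complex.exp (θ * Complex.I))
      = 1 := by
  rw [Complex.add_conj, Complex.re_ofReal_mul, Complex.exp_ofReal_mul_I_re, hθcos]
  field_simp
  norm_num

theorem Matrix.IsHermitian.exists_eq_fin_two {A : Matrix (Fin 2) (Fin 2) ℂ}
    (hA : A.IsHermitian) :
    ∃ r t u v : ℝ, A = !![(r : ℂ), u + v * Complex.I; u - v * Complex.I, t] := by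
  have hdiag (i : Fin 2) : ((A i i).re : ℂ) = A i i := Complex.conj_eq_iff_re.mp (hA.apply i i)
  have hoff : A 1 0 = conj (A 0 1) := (hA.apply 1 0).symm
  refine ⟨(A 0 0).re, (A 1 1).re, (A 0 1).re, (A 0 1).im, ?_⟩
  ext i j
  fin_cases i <;> fin_cases j <;> simp [hdiag, hoff, Complex.ext_iff]

namespace qubitFamily

variable {z : ℂ}

theorem eq_smul_vecMulVec (hprod : z * conj z = 2) (x : Fin 4) :
    ∃ c : ℂ, 0 < c ∧ ∃ v : Fin 2 → ℂ, v ≠ 0 ∧ qubitFamily z x = c • vecMulVec v (star v) := by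
  refine ⟨![2 / 5, 1 / 5, 1 / 5, 1 / 5] x, by fin_cases x <;> norm_num,
    ![![1, 0], ![1, 1], ![1, -z], ![1, -conj z]] x, by fin_cases x <;> simp, ?_⟩
  ext i j
  simp only [Matrix.smul_apply, vecMulVec_apply]
  fin_cases x <;> fin_cases i <;> fin_cases j <;> simp [qubitFamily, E1, E2]
  all_goals linear_combination -hprod

theorem posSemidef (hprod : z * conj z = 2) (x : Fin 4) : (qubitFamily z x).PosSemidef := by
  obtain ⟨c, hc, v, -, hx⟩ := eq_smul_vecMulVec hprod x
  exact hx ▸ (posSemidef_vecMulVec_self_star v).smul hc.le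

theorem rank_eq_one (hprod : z * conj z = 2) (x : Fin 4) : (qubitFamily z x).rank = 1 := by
  obtain ⟨c, hc, v, hv, hx⟩ := eq_smul_vecMulVec hprod x
  rw [hx, rank_smul_of_mem_nonZeroDivisors _ (mem_nonZeroDivisors_of_ne_zero hc.ne'),
    rank_vecMulVec_eq_one hv (star_ne_zero.mpr hv)]

theorem sum_eq_one (hsum : z + conj z = 1) : ∑ x, qubitFamily z x = 1 := by
  have hconj : conj z = 1 - z := by linear_combination hsum
  rw [Fin.sum_univ_four]
  ext i j
  fin_cases i <;> fin_cases j <;> simp [qubitFamily, E1, E2, one_apply, hconj] <;> ring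

theorem trace_mul_of_ne (hsum : z + conj z = 1) (hprod : z * conj z = 2) {x y : Fin 4}
    (hxy : x ≠ y) : (qubitFamily z x * qubitFamily z y).trace = 2 / 25 := by
  have hconj : conj z = 1 - z := by linear_combination hsum
  rw [hconj] at hprod
  fin_cases x <;> fin_cases y <;> simp [qubitFamily, E1, E2, trace_fin_two, hconj] at hxy ⊢
  all_goals grind

theorem mem_span_of_isHermitian (hsum : z + conj z = 1) (hprod : z * conj z = 2)
    {A : Matrix (Fin 2) (Fin 2) ℂ} (hA : A.IsHermitian) :
    A ∈ Submodule.span ℝ (Set.range (qubitFamily z)) := by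
  have hre : z.re = 1 / 2 := by
    have h := congrArg Complex.re hsum
    simp only [Complex.add_re, Complex.conj_re, Complex.one_re] at h
    linarith
  have him : z.im ≠ 0 := by
    intro h0
    have h := congrArg Complex.re hprod
    norm_num [Complex.mul_re, hre, h0] at h
  obtain ⟨b, hb, rfl⟩ : ∃ b : ℝ, (b : ℂ) ≠ 0 ∧ z = 1 / 2 + b * Complex.I :=
    ⟨z.im, Complex.ofReal_ne_zero.mpr him, Complex.ext (by simp [hre]) (by simp)⟩
  obtain ⟨r, t, u, v, rfl⟩ := hA.exists_eq_fin_two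
  rw [Submodule.mem_span_range_iff_exists_fun]
  refine ⟨![(5 * r - 2 * u - 3 * t) / 2, 4 * u + t, t - u + 5 * v / (2 * b),
    t - u - 5 * v / (2 * b)], ?_⟩
  rw [Fin.sum_univ_four]
  ext i j
  fin_cases i <;> fin_cases j <;> simp [qubitFamily, E1, E2, map_ofNat] <;> field_simp <;> ring

end qubitFamily

theorem example_isSemiSIC_general (θ : ℝ) (hθcos : Real.cos θ = 1 / (2 * Real.sqrt 2)) :
    (∀ x, (exE θ x).PosSemidef) ∧
    (∀ x, (exE θ x).rank = 1) ∧
    (E1 + E2 + E3 θ + E4 θ = 1) ∧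
    (∀ x y, x ≠ y → (exE θ x * exE θ y).trace = ((2 / 25 : ℝ) : ℂ)) ∧
    (∀ A : Matrix (Fin 2) (Fin 2) ℂ, A.IsHermitian →
      A ∈ Submodule.span ℝ (Set.range (exE θ))) := by
  have hsum := sqrt_two_mul_exp_add_conj hθcos
  have hprod := sqrt_two_mul_exp_mul_conj θ
  have hsumE : E1 + E2 + E3 θ + E4 θ = ∑ x, exE θ x := by simp [Fin.sum_univ_four, exE]
  rw [hsumE, exE_eq_qubitFamily]
  refine ⟨qubitFamily.posSemidef hprod, qubitFamily.rank_eq_one hprod,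
    qubitFamily.sum_eq_one hsum, fun x y hxy => ?_,
    fun A hA => qubitFamily.mem_span_of_isHermitian hsum hprod hA⟩
  push_cast
  exact qubitFamily.trace_mul_of_ne hsum hprod hxy

theorem example_isSemiSIC (θ : ℝ) (hθcos : Real.cos θ = 1 / (2 * Real.sqrt 2))
    (hθmem : θ ∈ Set.Ioc (Real.pi / 3) (Real.pi / 2)) :
    (∀ x, (exE θ x).PosSemidef) ∧
    (∀ x, (exE θ x).rank = 1) ∧
    (E1 + E2 + E3 θ + E4 θ = 1) ∧
    (∀ x y, x ≠ y → (exE θ x * exE θ y).trace = ((2 / 25 : ℝ) : ℂ)) ∧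
    (∀ A : Matrix (Fin 2) (Fin 2) ℂ, A.IsHermitian →
      A ∈ Submodule.span ℝ (Set.range (exE θ))) :=
  example_isSemiSIC_general θ hθcos
end
end

section
/- Let {E₁, E₂, E₃, E₄} be the semi-SIC POVM with parameter b = 2/25 on ℂ² given by E₁ := (2/5)·[[1,0],[0,0]], E₂ := (1/5)·[[1,1],[1,1]], E₃ := (1/5)·[[1, −√2·e^{−iθ}], [−√2·e^{iθ}, 2]], E₄ := (1/5)·[[1, −√2·e^{iθ}], [−√2·e^{−iθ}, 2]], where cos θ = 1/(2√2) and θ ∈ (π/3, π/2]. Define F₁ := (25/2)E₁ − (5/2)(E₁+E₂) − 1, F₂ := (25/2)E₂ − (5/2)(E₁+E₂) − 1, F₃ := (25/7)E₃ + (5/7)(E₃+E₄) − 1, F₄ := (25/7)E₄ + (5/7)(E₃+E₄) − 1. Then Tr[E_x F_y] = δ_{xy} for all x, y ∈ {1,2,3,4}. -/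
open Matrix
open scoped ComplexOrder

noncomputable section

/-- `F₁ = (25/2)E₁ − (5/2)(E₁+E₂) − 1`. -/
def F1 : Matrix (Fin 2) (Fin 2) ℂ := (25 / 2 : ℂ) • E1 - (5 / 2 : ℂ) • (E1 + E2) - 1

/-- `F₂ = (25/2)E₂ − (5/2)(E₁+E₂) − 1`. -/
def F2 : Matrix (Fin 2) (Fin 2) ℂ := (25 / 2 : ℂ) • E2 - (5 / 2 : ℂ) • (E1 + E2) - 1

/-- `F₃ = (25/7)E₃ + (5/7)(E₃+E₄) − 1`. -/
def F3 (θ : ℝ) : Matrix (Fin 2) (Fin 2) ℂ :=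
  (25 / 7 : ℂ) • E3 θ + (5 / 7 : ℂ) • (E3 θ + E4 θ) - 1

/-- `F₄ = (25/7)E₄ + (5/7)(E₃+E₄) − 1`. -/
def F4 (θ : ℝ) : Matrix (Fin 2) (Fin 2) ℂ :=
  (25 / 7 : ℂ) • E4 θ + (5 / 7 : ℂ) • (E3 θ + E4 θ) - 1

/-- The dual family `{F₁, F₂, F₃, F₄}`. -/
def exF (θ : ℝ) : Fin 4 → Matrix (Fin 2) (Fin 2) ℂ := ![F1, F2, F3 θ, F4 θ]

/-
Each `F_y` is a linear combination of the `Eₓ` and `1`, so the pairing `Tr (Eₓ F_y)` is determined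
by the traces `Tr Eₓ` and the Gram matrix `Tr (Eₓ E_y)`. Writing `u = √2 e^{iθ}` and
`v = √2 e^{-iθ}`, the Gram matrix depends on `θ` only through `u v = 2` and
`u + v = 2√2 cos θ = 1`; with these, `Tr (Eₓ²) = (Tr Eₓ)²` and `Tr (Eₓ E_y) = 2/25` for `x ≠ y`,
and the claim becomes a check on numbers.
-/

/-- The family `{E₁, E₂, E₃, E₄}` with `√2 e^{iθ}` and `√2 e^{-iθ}` replaced by `u` and `v`. -/
def semiSIC (u v : ℂ) : Fin 4 → Matrix (Fin 2) (Fin 2) ℂ :=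
  ![E1, E2, (1 / 5 : ℂ) • !![1, -v; -u, 2], (1 / 5 : ℂ) • !![1, -u; -v, 2]]

lemma exE_eq_semiSIC (θ : ℝ) :
    exE θ = semiSIC (Real.sqrt 2 * Complex.exp (θ * Complex.I))
      (Real.sqrt 2 * Complex.exp (-θ * Complex.I)) := by
  ext x : 1
  fin_cases x <;> simp [exE, semiSIC, E3, E4]

lemma sqrt_two_mul_exp_mul_sqrt_two_mul_exp_neg (θ : ℝ) :
    (Real.sqrt 2 * Complex.exp (θ * Complex.I)) * (Real.sqrt 2 * Complex.exp (-θ * Complex.I))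
      = 2 := by
  have hsqrt : ((Real.sqrt 2 : ℝ) : ℂ) * (Real.sqrt 2 : ℝ) = 2 := by
    exact_mod_cast Real.mul_self_sqrt zero_le_two
  rw [mul_mul_mul_comm, hsqrt, ← Complex.exp_add, neg_mul, add_neg_cancel, Complex.exp_zero,
    mul_one]

lemma sqrt_two_mul_exp_add_sqrt_two_mul_exp_neg (θ : ℝ) :
    (Real.sqrt 2 * Complex.exp (θ * Complex.I)) + (Real.sqrt 2 * Complex.exp (-θ * Complex.I))
      = ((2 * Real.sqrt 2 * Real.cos θ : ℝ) : ℂ) := by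
  rw [Complex.exp_mul_I, Complex.exp_mul_I, Complex.cos_neg, Complex.sin_neg]
  push_cast
  ring

section semiSIC

variable {u v : ℂ}

lemma trace_semiSIC (x : Fin 4) : (semiSIC u v x).trace = ![2 / 5, 2 / 5, 3 / 5, 3 / 5] x := by
  fin_cases x <;> norm_num [semiSIC, E1, E2, trace_fin_two]

lemma trace_semiSIC_mul_semiSIC (hmul : u * v = 2) (hadd : u + v = 1) (x y : Fin 4) :
    (semiSIC u v x * semiSIC u v y).trace =
      if x = y then (semiSIC u v x).trace ^ 2 else 2 / 25 := by
  fin_cases x <;> fin_cases y <;> simp [semiSIC, E1, E2, trace_fin_two]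
  all_goals first
    | norm_num; done
    | linear_combination (-1 / 25 : ℂ) * hadd
    | linear_combination (2 / 25 : ℂ) * hmul
    | linear_combination (1 / 25 : ℂ) * ((u + v + 1) * hadd - 2 * hmul)

def semiSICDual (u v : ℂ) : Fin 4 → Matrix (Fin 2) (Fin 2) ℂ :=
  let E := semiSIC u v
  ![(25 / 2 : ℂ) • E 0 - (5 / 2 : ℂ) • (E 0 + E 1) - 1,
    (25 / 2 : ℂ) • E 1 - (5 / 2 : ℂ) • (E 0 + E 1) - 1,
    (25 / 7 : ℂ) • E 2 + (5 / 7 : ℂ) • (E 2 + E 3) - 1,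
    (25 / 7 : ℂ) • E 3 + (5 / 7 : ℂ) • (E 2 + E 3) - 1]

lemma trace_semiSIC_mul_semiSICDual (hmul : u * v = 2) (hadd : u + v = 1) (x y : Fin 4) :
    (semiSIC u v x * semiSICDual u v y).trace = if x = y then 1 else 0 := by
  fin_cases x <;> fin_cases y <;>
    norm_num [semiSICDual, Matrix.mul_sub, Matrix.mul_add, trace_semiSIC_mul_semiSIC hmul hadd,
      trace_semiSIC, Fin.ext_iff]

end semiSIC

lemma exF_eq_semiSICDual (θ : ℝ) :
    exF θ = semiSICDual (Real.sqrt 2 * Complex.exp (θ * Complex.I))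
      (Real.sqrt 2 * Complex.exp (-θ * Complex.I)) := by
  unfold semiSICDual
  rw [← exE_eq_semiSIC]
  rfl

theorem example_dual_basis_general (θ : ℝ) (hθcos : Real.cos θ = 1 / (2 * Real.sqrt 2)) :
    ∀ x y : Fin 4, (exE θ x * exF θ y).trace = if x = y then 1 else 0 := by
  have hadd : (Real.sqrt 2 * Complex.exp (θ * Complex.I))
      + (Real.sqrt 2 * Complex.exp (-θ * Complex.I)) = 1 := by
    rw [sqrt_two_mul_exp_add_sqrt_two_mul_exp_neg, hθcos, mul_one_div_cancel (by positivity),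
      Complex.ofReal_one]
  rw [exE_eq_semiSIC, exF_eq_semiSICDual]
  exact trace_semiSIC_mul_semiSICDual (sqrt_two_mul_exp_mul_sqrt_two_mul_exp_neg θ) hadd

theorem example_dual_basis (θ : ℝ) (hθcos : Real.cos θ = 1 / (2 * Real.sqrt 2))
    (hθmem : θ ∈ Set.Ioc (Real.pi / 3) (Real.pi / 2)) :
    ∀ x y : Fin 4, (exE θ x * exF θ y).trace = if x = y then 1 else 0 :=
  example_dual_basis_general θ hθcos
end
end

section
/- Let {F₁, F₂, F₃, F₄} be the dual basis of the b = 2/25 semi-SIC POVM on ℂ², i.e., F₁ := (25/2)E₁ − (5/2)(E₁+E₂) − 1, F₂ := (25/2)E₂ − (5/2)(E₁+E₂) − 1, F₃ := (25/7)E₃ + (5/7)(E₃+E₄) − 1, F₄ := (25/7)E₄ + (5/7)(E₃+E₄) − 1, where E₁ := (2/5)·[[1,0],[0,0]], E₂ := (1/5)·[[1,1],[1,1]], E₃ := (1/5)·[[1, −√2·e^{−iθ}], [−√2·e^{iθ}, 2]], E₄ := (1/5)·[[1, −√2·e^{iθ}], [−√2·e^{−iθ}, 2]], cos θ = 1/(2√2),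 θ ∈ (π/3, π/2]. Then for every real vector p = (p₁, p₂, p₃, p₄), det(Σ_{y=1}^{4} p_y F_y) = −4p₁² − 4p₂² − (8/7)p₃² − (8/7)p₄² + (9/2)p₁p₂ + 2p₁p₃ + 2p₁p₄ + 2p₂p₃ + 2p₂p₄ + (9/7)p₃p₄. -/
/-! With `b = -√2·e^{-iθ}` and `c = -√2·e^{iθ}`, the matrices `E₃` and `E₄` are `(1/5)·[[1, b], [c, 2]]`
and `(1/5)·[[1, c], [b, 2]]`. Every `F_y` is then an explicit matrix whose entries are affine in `b, c`,
and the determinant of `Σ p_y F_y` is a quadratic form in `p` whose coefficients are symmetric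
polynomials in `b, c`. Only `b + c = -2√2 cos θ = -1` and `bc = 2` enter, and they reduce it to the
stated form. -/

open Matrix
open scoped ComplexOrder

noncomputable section

def offDiagE (b c : ℂ) : Matrix (Fin 2) (Fin 2) ℂ := (1 / 5 : ℂ) • !![1, b; c, 2]

def offDiagF (b c : ℂ) : Matrix (Fin 2) (Fin 2) ℂ :=
  (25 / 7 : ℂ) • offDiagE b c + (5 / 7 : ℂ) • (offDiagE b c + offDiagE c b) - 1

def dualFamily (b c : ℂ) : Fin 4 → Matrix (Fin 2) (Fin 2) ℂ :=
  ![F1, F2, offDiagF b c, offDiagF c b]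

lemma exF_eq_dualFamily (θ : ℝ) :
    exF θ = dualFamily (-(Real.sqrt 2 : ℂ) * Complex.exp (-(θ : ℂ) * Complex.I))
      (-(Real.sqrt 2 : ℂ) * Complex.exp ((θ : ℂ) * Complex.I)) := by
  rw [exF, F4, add_comm (E3 θ) (E4 θ)]
  rfl

lemma F1_eq : F1 = !![5 / 2, -1 / 2; -1 / 2, -3 / 2] := by
  ext i j; fin_cases i <;> fin_cases j <;> norm_num [F1, E1, E2]

lemma F2_eq : F2 = !![0, 2; 2, 1] := by
  ext i j; fin_cases i <;> fin_cases j <;> norm_num [F2, E1, E2]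

lemma offDiagF_eq (b c : ℂ) : offDiagF b c = !![0, (6 * b + c) / 7; (6 * c + b) / 7, 1] := by
  ext i j; fin_cases i <;> fin_cases j <;> simp [offDiagF, offDiagE] <;> ring

lemma sum_smul_dualFamily (b c : ℂ) (p : Fin 4 → ℂ) :
    ∑ y, p y • dualFamily b c y =
      !![5 / 2 * p 0,
          -p 0 / 2 + 2 * p 1 + ((6 * b + c) * p 2 + (6 * c + b) * p 3) / 7;
         -p 0 / 2 + 2 * p 1 + ((6 * c + b) * p 2 + (6 * b + c) * p 3) / 7,
          -3 / 2 * p 0 + p 1 + p 2 + p 3] := by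
  rw [Fin.sum_univ_four]
  simp only [dualFamily, Matrix.cons_val, F1_eq, F2_eq, offDiagF_eq]
  ext i j; fin_cases i <;> fin_cases j <;> simp <;> ring

lemma det_sum_smul_dualFamily {b c : ℂ} (hsum : b + c = -1) (hprod : b * c = 2) (p : Fin 4 → ℂ) :
    (∑ y, p y • dualFamily b c y).det =
      -4 * p 0 ^ 2 - 4 * p 1 ^ 2 - 8 / 7 * p 2 ^ 2 - 8 / 7 * p 3 ^ 2 +
        9 / 2 * p 0 * p 1 + 2 * p 0 * p 2 + 2 * p 0 * p 3 +
        2 * p 1 * p 2 + 2 * p 1 * p 3 + 9 / 7 * p 2 * p 3 := by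
  rw [sum_smul_dualFamily, det_fin_two_of]
  -- `(6b + c)(6c + b) = 6(b + c)² + 25bc` and `(6b + c)² + (6c + b)² = 37(b + c)² - 50bc`
  linear_combination
    (-(-p 0 / 2 + 2 * p 1) * (p 2 + p 3) -
        (b + c - 1) * (6 * (p 2 ^ 2 + p 3 ^ 2) + 37 * p 2 * p 3) / 49) * hsum -
      25 * (p 2 - p 3) ^ 2 / 49 * hprod

lemma sqrt_two_mul_exp_neg_add (θ : ℝ) :
    (Real.sqrt 2 : ℂ) * Complex.exp (-(θ : ℂ) * Complex.I) +
        (Real.sqrt 2 : ℂ) * Complex.exp ((θ : ℂ) * Complex.I) =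
      ((2 * Real.sqrt 2 * Real.cos θ : ℝ) : ℂ) := by
  push_cast
  rw [mul_right_comm, Complex.two_cos]
  ring

lemma sqrt_two_mul_exp_neg_mul (θ : ℝ) :
    (Real.sqrt 2 : ℂ) * Complex.exp (-(θ : ℂ) * Complex.I) *
        ((Real.sqrt 2 : ℂ) * Complex.exp ((θ : ℂ) * Complex.I)) = 2 := by
  rw [mul_mul_mul_comm, ← Complex.exp_add, neg_mul, neg_add_cancel, Complex.exp_zero, mul_one,
    ← Complex.ofReal_mul, Real.mul_self_sqrt zero_le_two, Complex.ofReal_ofNat]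

theorem det_sum_dual_general (θ : ℝ) (hθcos : Real.cos θ = 1 / (2 * Real.sqrt 2))
    (p : Fin 4 → ℝ) :
    (∑ y, (p y : ℂ) • exF θ y).det =
      ((-4 * p 0 ^ 2 - 4 * p 1 ^ 2 - 8 / 7 * p 2 ^ 2 - 8 / 7 * p 3 ^ 2 +
        9 / 2 * p 0 * p 1 + 2 * p 0 * p 2 + 2 * p 0 * p 3 +
        2 * p 1 * p 2 + 2 * p 1 * p 3 + 9 / 7 * p 2 * p 3 : ℝ) : ℂ) := by
  have hsum := sqrt_two_mul_exp_neg_add θ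
  rw [hθcos, mul_one_div_cancel (by positivity), Complex.ofReal_one] at hsum
  have hprod := sqrt_two_mul_exp_neg_mul θ
  rw [exF_eq_dualFamily,
    det_sum_smul_dualFamily (by linear_combination -hsum) (by linear_combination hprod)]
  push_cast
  ring

theorem det_sum_dual (θ : ℝ) (hθcos : Real.cos θ = 1 / (2 * Real.sqrt 2))
    (hθmem : θ ∈ Set.Ioc (Real.pi / 3) (Real.pi / 2))
    (p : Fin 4 → ℝ) :
    (∑ y, (p y : ℂ) • exF θ y).det =
      ((-4 * p 0 ^ 2 - 4 * p 1 ^ 2 - 8 / 7 * p 2 ^ 2 - 8 / 7 * p 3 ^ 2 +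
        9 / 2 * p 0 * p 1 + 2 * p 0 * p 2 + 2 * p 0 * p 3 +
        2 * p 1 * p 2 + 2 * p 1 * p 3 + 9 / 7 * p 2 * p 3 : ℝ) : ℂ) :=
  det_sum_dual_general θ hθcos p
end
end
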